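/- For all n ≥ 0 and k ≥ 0, the Padovan sequence satisfies P_{n+k} = P_{n+1} P_{k+2} + P_{n+2} P_{k+1} + P_n P_k. -/
import Mathlib


def padovan : ℕ → ℕ
  | 0 => 1
  | 1 => 0
  | 2 => 0
  | (n + 3) => padovan (n + 1) + padovan n

theorem padovan_add (n k : ℕ) :
    padovan (n + k) =
      padovan (n + 1) * padovan (k + 2) + padovan (n + 2) * padovan (k + 1) +
        padovan n * padovan k := by
  induction k using Nat.strong_induction_on with
  | _ k ih =>
    match k with
    | 0 => simp [padovan]
    | 1 => simp [padovan]
    | 2 => simp [padovan]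
    | (k + 3) =>
      have h1 := ih (k + 1) (by omega)
      have h0 := ih k (by omega)
      have : n + (k + 3) = (n + k) + 3 := by ring
      rw [this, padovan, show n + k + 1 = n + (k + 1) from by ring, h1, h0,
        show k + 3 + 2 = (k + 2) + 3 from rfl, show k + 3 + 1 = (k + 1) + 3 from rfl,
        padovan, padovan, padovan]
      ring_nf
      rw [show 4 + k = k + 1 + 3 from by omega, padovan]
      ring
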